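/- arXiv:2304.12572 — 3 statements merged into one kernel-verified Lean document; each statement's English description precedes it below -/
import Mathlib

section
/- For Dirichlet characters χ, ψ and complex numbers u, v, s with Re(s) large enough that all series below converge absolutely (e.g. Re(s) > 1 + max(Re u,0) + max(Re v,0) + max(Re(u+v),0)), the Dirichlet series Σ_{n≥1} σ_u(n,χ) σ_v(n,ψ) n^{−s} equals ζ(s) L(s−u,χ) L(s−v,ψ) L(s−u−v,χψ) / L(2s−u−v,χψ). -/
open Finset

/-- Twisted sum of divisors function. -/
noncomputable def sigmaChar {N : ℕ} (χ : DirichletCharacter ℂ N) (s : ℂ) (n : ℤ) : ℂ :=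
  ∑ d ∈ n.natAbs.divisors, χ (d : ZMod N) * (d : ℂ) ^ s

/-!
With `f n = χ n * n ^ u` and `g n = ψ n * n ^ v`, both completely multiplicative, the coefficients
of the series are the pointwise product `(ζ * f) (ζ * g)`. This equals `ζ * f * g * (f g) * S`,
where `S` is supported on the squares with `S (m ^ 2) = μ m * f m * g m`. Both sides are
multiplicative, and at a prime `p`, with `a = f p`, `b = g p` and `[k]_a = 1 + a + ⋯ + a ^ k`,
this is the Euler factor identity
`∑ₖ [k]_a [k]_b X ^ k = (1 - a b X ^ 2) / ((1 - X) (1 - a X) (1 - b X) (1 - a b X))`.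
Taking L-series, `L(S, s) = L(μ f g, 2 s) = 1 / L(χ ψ, 2 s - u - v)`.
-/

open ArithmeticFunction LSeries Complex
open scoped ArithmeticFunction.zeta ArithmeticFunction.Moebius LSeries.notation

namespace ArithmeticFunction

variable {R : Type*}

section PrimePow

variable [CommSemiring R]

theorem mul_apply_prime_pow (f g : ArithmeticFunction R) {p : ℕ} (hp : p.Prime) (k : ℕ) :
    (f * g) (p ^ k) = ∑ i ∈ range (k + 1), f (p ^ i) * g (p ^ (k - i)) := by
  rw [mul_apply, Nat.sum_divisorsAntidiagonal (fun x y => f x * g y),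
    Nat.sum_divisors_prime_pow hp]
  refine sum_congr rfl fun i hi => ?_
  rw [Nat.pow_div (Nat.lt_succ_iff.mp (mem_range.mp hi)) hp.pos]

theorem mul_apply_prime_pow_of_eq_zero (f h : ArithmeticFunction R) {p : ℕ} (hp : p.Prime)
    {d n : ℕ} (hd : d ≠ 0) (hdn : d ≤ n) (hh : ∀ j ≤ n, j ≠ 0 → j ≠ d → h (p ^ j) = 0) :
    (f * h) (p ^ n) = f (p ^ n) * h 1 + f (p ^ (n - d)) * h (p ^ d) := by
  rw [mul_apply_prime_pow _ _ hp, sum_eq_add_of_mem n (n - d) (mem_range.2 (by omega))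
    (mem_range.2 (by omega)) (by omega) fun i hi hi' => by
      rw [hh _ (by omega) (by rw [mem_range] at hi; omega) (by omega), mul_zero],
    Nat.sub_self, pow_zero, Nat.sub_sub_self hdn]

end PrimePow

def IsCompletelyMultiplicative [MonoidWithZero R] (f : ArithmeticFunction R) : Prop :=
  f 1 = 1 ∧ ∀ m n, f (m * n) = f m * f n

namespace IsCompletelyMultiplicative

section MonoidWithZero

variable [MonoidWithZero R] {f : ArithmeticFunction R}

theorem isMultiplicative (hf : f.IsCompletelyMultiplicative) : f.IsMultiplicative :=
  ⟨hf.1, fun _ => hf.2 _ _⟩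

theorem map_pow (hf : f.IsCompletelyMultiplicative) (n k : ℕ) : f (n ^ k) = f n ^ k := by
  induction k with
  | zero => simpa using hf.1
  | succ k ih => rw [pow_succ, hf.2, ih, pow_succ]

end MonoidWithZero

theorem pmul [CommMonoidWithZero R] {f g : ArithmeticFunction R}
    (hf : f.IsCompletelyMultiplicative) (hg : g.IsCompletelyMultiplicative) :
    (f.pmul g).IsCompletelyMultiplicative :=
  ⟨by rw [pmul_apply, hf.1, hg.1, one_mul],
    fun m n => by simp only [pmul_apply, hf.2, hg.2, mul_mul_mul_comm]⟩

section CommSemiring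

variable [CommSemiring R] {f : ArithmeticFunction R}

theorem pmul_mul (hf : f.IsCompletelyMultiplicative) (g h : ArithmeticFunction R) :
    f.pmul (g * h) = f.pmul g * f.pmul h := by
  ext n
  simp only [pmul_apply, mul_apply, mul_sum]
  refine sum_congr rfl fun x hx => ?_
  rw [← (Nat.mem_divisorsAntidiagonal.mp hx).1, hf.2]
  ring

theorem pmul_one (hf : f.IsCompletelyMultiplicative) : f.pmul 1 = 1 := by
  ext n
  rw [pmul_apply, one_apply]
  split_ifs with hn
  · rw [hn, hf.1, one_mul]
  · rw [mul_zero]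

theorem mul_apply_prime_pow_succ {g : ArithmeticFunction R} (hg : g.IsCompletelyMultiplicative)
    (f : ArithmeticFunction R) {p : ℕ} (hp : p.Prime) (k : ℕ) :
    (f * g) (p ^ (k + 1)) = f (p ^ (k + 1)) + g p * (f * g) (p ^ k) := by
  rw [mul_apply_prime_pow _ _ hp, mul_apply_prime_pow _ _ hp, sum_range_succ, mul_sum,
    Nat.sub_self, pow_zero, hg.1, mul_one, add_comm]
  congr 1
  refine sum_congr rfl fun i hi => ?_
  rw [Nat.sub_add_comm (Nat.lt_succ_iff.mp (mem_range.mp hi)), hg.map_pow, hg.map_pow, pow_succ]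
  ring

end CommSemiring

theorem mul_pmul_moebius [CommRing R] {f : ArithmeticFunction R}
    (hf : f.IsCompletelyMultiplicative) : f * (μ : ArithmeticFunction R).pmul f = 1 := by
  calc f * (μ : ArithmeticFunction R).pmul f
      = f.pmul ζ * f.pmul μ := by rw [pmul_zeta, pmul_comm]
    _ = 1 := by rw [← hf.pmul_mul, coe_zeta_mul_coe_moebius, hf.pmul_one]

end IsCompletelyMultiplicative

section SqExtend

variable [Zero R]

noncomputable def sqExtend (f : ArithmeticFunction R) : ArithmeticFunction R :=
  ⟨Function.extend (· ^ 2) f 0, by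
    simpa using (Nat.pow_left_injective two_ne_zero).extend_apply f 0 0⟩

@[simp]
theorem sqExtend_apply_sq (f : ArithmeticFunction R) (m : ℕ) : sqExtend f (m ^ 2) = f m :=
  (Nat.pow_left_injective two_ne_zero).extend_apply f 0 m

@[simp]
theorem sqExtend_apply_one (f : ArithmeticFunction R) : sqExtend f 1 = f 1 := by
  simpa using sqExtend_apply_sq f 1

theorem sqExtend_apply_of_not_sq (f : ArithmeticFunction R) {n : ℕ} (hn : ¬∃ m, m ^ 2 = n) :
    sqExtend f n = 0 :=
  Function.extend_apply' _ _ _ hn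

theorem sqExtend_apply_prime_pow_of_odd (f : ArithmeticFunction R) {p k : ℕ} (hp : p.Prime)
    (hk : Odd k) : sqExtend f (p ^ k) = 0 := by
  refine sqExtend_apply_of_not_sq f fun ⟨m, hm⟩ =>
    Nat.not_even_iff_odd.2 hk ⟨m.factorization p, ?_⟩
  have := congrArg (·.factorization p) hm
  simp only [Nat.factorization_pow, Finsupp.smul_apply, smul_eq_mul,
    Nat.Prime.factorization_pow hp, Finsupp.single_eq_same] at this
  omega

theorem sqExtend_apply_prime_pow_two_mul (f : ArithmeticFunction R) (p k : ℕ) :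
    sqExtend f (p ^ (2 * k)) = f (p ^ k) := by
  rw [mul_comm, pow_mul, sqExtend_apply_sq]

end SqExtend

theorem IsMultiplicative.sqExtend [MonoidWithZero R] {f : ArithmeticFunction R}
    (hf : f.IsMultiplicative) : (sqExtend f).IsMultiplicative := by
  refine ⟨(sqExtend_apply_one f).trans hf.1, fun {m n} hmn => ?_⟩
  by_cases hm : ∃ a, a ^ 2 = m
  · by_cases hn : ∃ b, b ^ 2 = n
    · obtain ⟨a, rfl⟩ := hm
      obtain ⟨b, rfl⟩ := hn
      rw [← mul_pow, sqExtend_apply_sq, sqExtend_apply_sq, sqExtend_apply_sq,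
        hf.map_mul_of_coprime ((Nat.coprime_pow_left_iff two_pos _ _).1
          ((Nat.coprime_pow_right_iff two_pos _ _).1 hmn))]
    · rw [sqExtend_apply_of_not_sq f hn, mul_zero, sqExtend_apply_of_not_sq]
      rintro ⟨c, hc⟩
      obtain ⟨b, hb⟩ := exists_eq_pow_of_mul_eq_pow (Nat.isUnit_iff.mpr hmn.symm)
        ((mul_comm n m).trans hc.symm)
      exact hn ⟨b, hb.symm⟩
  · rw [sqExtend_apply_of_not_sq f hm, zero_mul, sqExtend_apply_of_not_sq]
    rintro ⟨c, hc⟩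
    obtain ⟨a, ha⟩ := exists_eq_pow_of_mul_eq_pow (Nat.isUnit_iff.mpr hmn) hc.symm
    exact hm ⟨a, ha.symm⟩

section CommRing

variable [CommRing R]

theorem pmul_moebius_apply_prime_pow_of_two_le (f : ArithmeticFunction R) {p k : ℕ}
    (hp : p.Prime) (hk : 2 ≤ k) : (μ : ArithmeticFunction R).pmul f (p ^ k) = 0 := by
  rw [pmul_apply, intCoe_apply, moebius_apply_prime_pow hp (by omega), if_neg (by omega),
    Int.cast_zero, zero_mul]

theorem sqExtend_pmul_moebius_apply_prime_pow (f : ArithmeticFunction R) {p j : ℕ}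
    (hp : p.Prime) (hj₀ : j ≠ 0) (hj₂ : j ≠ 2) :
    sqExtend ((μ : ArithmeticFunction R).pmul f) (p ^ j) = 0 := by
  obtain ⟨i, rfl | rfl⟩ := Nat.even_or_odd' j
  · rw [sqExtend_apply_prime_pow_two_mul, pmul_moebius_apply_prime_pow_of_two_le f hp (by omega)]
  · exact sqExtend_apply_prime_pow_of_odd _ hp (odd_two_mul_add_one i)

theorem mul_pmul_moebius_apply_prime_pow_succ (F : ArithmeticFunction R)
    {W : ArithmeticFunction R} (hW : W.IsMultiplicative) {p : ℕ} (hp : p.Prime) (k : ℕ) :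
    (F * (μ : ArithmeticFunction R).pmul W) (p ^ (k + 1))
      = F (p ^ (k + 1)) - W p * F (p ^ k) := by
  rw [mul_apply_prime_pow_of_eq_zero _ _ hp one_ne_zero (by omega)
    fun j _ hj₀ hj₁ => pmul_moebius_apply_prime_pow_of_two_le W hp (by omega)]
  simp only [Nat.add_sub_cancel, pow_one, pmul_apply, intCoe_apply, moebius_apply_one,
    moebius_apply_prime hp, hW.map_one]
  push_cast
  ring

theorem mul_sqExtend_pmul_moebius_apply_prime_pow_add_two (G : ArithmeticFunction R)
    {W : ArithmeticFunction R} (hW : W.IsMultiplicative) {p : ℕ} (hp : p.Prime) (k : ℕ) :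
    (G * sqExtend ((μ : ArithmeticFunction R).pmul W)) (p ^ (k + 2))
      = G (p ^ (k + 2)) - W p * G (p ^ k) := by
  rw [mul_apply_prime_pow_of_eq_zero _ _ hp two_ne_zero (by omega)
    fun j _ hj₀ hj₂ => sqExtend_pmul_moebius_apply_prime_pow W hp hj₀ hj₂]
  simp only [Nat.add_sub_cancel, sqExtend_apply_one, sqExtend_apply_sq, pmul_apply, intCoe_apply,
    moebius_apply_one, moebius_apply_prime hp, hW.map_one]
  push_cast
  ring

theorem mul_sqExtend_apply_prime (G h : ArithmeticFunction R) {p : ℕ} (hp : p.Prime) :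
    (G * sqExtend h) p = G p * h 1 := by
  have := mul_apply_prime_pow_of_eq_zero G (sqExtend h) hp one_ne_zero le_rfl (by omega)
  rwa [sqExtend_apply_prime_pow_of_odd h hp odd_one, pow_one, mul_zero, add_zero,
    sqExtend_apply_one] at this

theorem IsCompletelyMultiplicative.zeta_mul_pmul_zeta_mul_mul_moebius_pmul
    {f g : ArithmeticFunction R} (hf : f.IsCompletelyMultiplicative)
    (hg : g.IsCompletelyMultiplicative) :
    (ζ * f).pmul (ζ * g) * (μ : ArithmeticFunction R).pmul (f.pmul g)
      = ζ * f * g * sqExtend ((μ : ArithmeticFunction R).pmul (f.pmul g)) := by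
  have hζf := (isMultiplicative_zeta.natCast (R := R)).mul hf.isMultiplicative
  have hζg := (isMultiplicative_zeta.natCast (R := R)).mul hg.isMultiplicative
  have hζfg := hζf.mul hg.isMultiplicative
  have hfg := hf.isMultiplicative.pmul hg.isMultiplicative
  have hh := isMultiplicative_moebius.intCast.pmul hfg
  have hL := (hζf.pmul hζg).mul hh
  refine (IsMultiplicative.eq_iff_eq_on_prime_powers _ hL _ (hζfg.mul hh.sqExtend)).2
    fun p k hp => ?_
  -- With `A, B, G` the values of `ζ * f, ζ * g, ζ * f * g` at powers of `p`, both sides at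
  -- `p ^ (k + 1)` reduce to `1 + f p * A k + g p * B k` via the recurrences below.
  have hζ_mul {f : ArithmeticFunction R} (hf : f.IsCompletelyMultiplicative) (k : ℕ) :
      (ζ * f) (p ^ (k + 1)) = 1 + f p * (ζ * f) (p ^ k) := by
    rw [hf.mul_apply_prime_pow_succ _ hp, natCoe_apply, zeta_apply_ne (pow_ne_zero _ hp.ne_zero),
      Nat.cast_one]
  have hGf := hg.mul_apply_prime_pow_succ (ζ * f) hp
  have hGg (k : ℕ) :
      (ζ * f * g) (p ^ (k + 1)) = (ζ * g) (p ^ (k + 1)) + f p * (ζ * f * g) (p ^ k) := by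
    rw [mul_right_comm]; exact hf.mul_apply_prime_pow_succ (ζ * g) hp k
  rcases k with _ | _ | k
  · rw [pow_zero, hL.map_one, (hζfg.mul hh.sqExtend).map_one]
  · have hA := hζ_mul hf 0
    have hB := hζ_mul hg 0
    have hG := hGf 0
    simp only [zero_add, pow_one, pow_zero, hζf.map_one, hζg.map_one, hζfg.map_one] at hA hB hG
    rw [mul_pmul_moebius_apply_prime_pow_succ _ hfg hp, zero_add, pow_one, pow_zero,
      mul_sqExtend_apply_prime _ _ hp, pmul_apply, pmul_apply, pmul_apply, hζf.map_one,
      hζg.map_one, hh.map_one, hA, hB, hG, hA]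
    ring
  · rw [mul_pmul_moebius_apply_prime_pow_succ _ hfg hp,
      mul_sqExtend_pmul_moebius_apply_prime_pow_add_two _ hfg hp, pmul_apply, pmul_apply,
      pmul_apply, hζ_mul hf (k + 1), hζ_mul hg (k + 1), hGf (k + 1), hGg k, hζ_mul hf (k + 1)]
    ring

theorem IsCompletelyMultiplicative.zeta_mul_pmul_zeta_mul {f g : ArithmeticFunction R}
    (hf : f.IsCompletelyMultiplicative) (hg : g.IsCompletelyMultiplicative) :
    (ζ * f).pmul (ζ * g)
      = ζ * f * g * f.pmul g * sqExtend ((μ : ArithmeticFunction R).pmul (f.pmul g)) := by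
  linear_combination f.pmul g * hf.zeta_mul_pmul_zeta_mul_mul_moebius_pmul hg
    - (ζ * f).pmul (ζ * g) * (hf.pmul hg).mul_pmul_moebius

end CommRing

end ArithmeticFunction

theorem LSeriesSummable.pmul_moebius {f : ArithmeticFunction ℂ} {s : ℂ}
    (hf : LSeriesSummable f s) : LSeriesSummable ((μ : ArithmeticFunction ℂ).pmul f) s := by
  refine .of_norm <| hf.norm.of_nonneg_of_le (fun _ => norm_nonneg _) fun n => norm_term_le s ?_
  rw [pmul_apply, intCoe_apply, norm_mul, norm_intCast]
  exact mul_le_of_le_one_left (norm_nonneg _) (mod_cast abs_moebius_le_one)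

namespace ArithmeticFunction

theorem IsCompletelyMultiplicative.LSeries_mul_LSeries_pmul_moebius {f : ArithmeticFunction ℂ}
    (hf : f.IsCompletelyMultiplicative) {s : ℂ} (hs : LSeriesSummable f s) :
    LSeries f s * LSeries ((μ : ArithmeticFunction ℂ).pmul f) s = 1 := by
  rw [← LSeries_mul' hs hs.pmul_moebius, hf.mul_pmul_moebius, one_eq_delta, LSeries_delta,
    Pi.one_apply]

theorem term_sqExtend (f : ArithmeticFunction ℂ) (s : ℂ) :
    term (sqExtend f) s = Function.extend (· ^ 2) (term f (2 * s)) 0 := by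
  funext n
  by_cases hn : ∃ m, m ^ 2 = n
  · obtain ⟨m, rfl⟩ := hn
    rw [(Nat.pow_left_injective two_ne_zero).extend_apply]
    rcases eq_or_ne m 0 with rfl | hm
    · simp
    rw [term_of_ne_zero (pow_ne_zero 2 hm), term_of_ne_zero hm, sqExtend_apply_sq, Nat.cast_pow,
      ← natCast_cpow_natCast_mul, Nat.cast_ofNat]
  · rw [Function.extend_apply' _ _ _ hn, term_def, sqExtend_apply_of_not_sq f hn]
    simp

theorem LSeries_sqExtend (f : ArithmeticFunction ℂ) (s : ℂ) :
    LSeries (sqExtend f) s = LSeries f (2 * s) := by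
  rw [LSeries, term_sqExtend, tsum_extend_zero (Nat.pow_left_injective two_ne_zero), LSeries]

theorem LSeriesSummable_sqExtend_iff {f : ArithmeticFunction ℂ} {s : ℂ} :
    LSeriesSummable (sqExtend f) s ↔ LSeriesSummable f (2 * s) := by
  rw [LSeriesSummable, term_sqExtend, summable_extend_zero (Nat.pow_left_injective two_ne_zero),
    LSeriesSummable]

end ArithmeticFunction

theorem LSeries.term_mul_cpow (f : ℕ → ℂ) (u s : ℂ) :
    term (fun n => f n * (n : ℂ) ^ u) s = term f (s - u) := by
  funext n
  rcases eq_or_ne n 0 with rfl | hn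
  · rw [term_zero, term_zero]
  rw [term_of_ne_zero hn, term_of_ne_zero hn, cpow_sub _ _ (Nat.cast_ne_zero.2 hn),
    div_div_eq_mul_div]

theorem LSeries_mul_cpow (f : ℕ → ℂ) (u s : ℂ) :
    LSeries (fun n => f n * (n : ℂ) ^ u) s = LSeries f (s - u) := by
  rw [LSeries, term_mul_cpow, LSeries]

theorem LSeriesSummable_mul_cpow_iff {f : ℕ → ℂ} {u s : ℂ} :
    LSeriesSummable (fun n => f n * (n : ℂ) ^ u) s ↔ LSeriesSummable f (s - u) := by
  rw [LSeriesSummable, term_mul_cpow, LSeriesSummable]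

namespace DirichletCharacter

variable {N : ℕ}

noncomputable def mulCpow (χ : DirichletCharacter ℂ N) (u : ℂ) : ArithmeticFunction ℂ :=
  toArithmeticFunction fun n => χ n * (n : ℂ) ^ u

theorem mulCpow_apply (χ : DirichletCharacter ℂ N) (u : ℂ) {n : ℕ} (hn : n ≠ 0) :
    χ.mulCpow u n = χ n * (n : ℂ) ^ u := by
  simp [mulCpow, toArithmeticFunction, hn]

theorem isCompletelyMultiplicative_mulCpow (χ : DirichletCharacter ℂ N) (u : ℂ) :
    (χ.mulCpow u).IsCompletelyMultiplicative := by
  refine ⟨by simp [mulCpow_apply], fun m n => ?_⟩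
  rcases eq_or_ne m 0 with rfl | hm
  · simp
  rcases eq_or_ne n 0 with rfl | hn
  · simp
  rw [mulCpow_apply _ _ (mul_ne_zero hm hn), mulCpow_apply _ _ hm, mulCpow_apply _ _ hn,
    Nat.cast_mul, map_mul, Nat.cast_mul, natCast_mul_natCast_cpow]
  ring

theorem mulCpow_mul (χ ψ : DirichletCharacter ℂ N) (u v : ℂ) :
    (χ * ψ).mulCpow (u + v) = (χ.mulCpow u).pmul (ψ.mulCpow v) := by
  ext n
  rcases eq_or_ne n 0 with rfl | hn
  · simp
  rw [pmul_apply, mulCpow_apply _ _ hn, mulCpow_apply _ _ hn, mulCpow_apply _ _ hn,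
    MulChar.mul_apply, cpow_add _ _ (Nat.cast_ne_zero.2 hn)]
  ring

theorem LSeriesSummable_mulCpow (χ : DirichletCharacter ℂ N) {u s : ℂ} (h : 1 < (s - u).re) :
    LSeriesSummable (χ.mulCpow u) s :=
  (LSeriesSummable_congr s fun hn => mulCpow_apply χ u hn).2 <|
    LSeriesSummable_mul_cpow_iff.2 <| LSeriesSummable_of_one_lt_re χ h

theorem LSeries_mulCpow [NeZero N] (χ : DirichletCharacter ℂ N) {u s : ℂ} (h : 1 < (s - u).re) :
    LSeries (χ.mulCpow u) s = χ.LFunction (s - u) := by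
  rw [LSeries_congr (fun hn => mulCpow_apply χ u hn), LSeries_mul_cpow, LFunction_eq_LSeries χ h]

end DirichletCharacter

theorem sigmaChar_natCast {N : ℕ} (χ : DirichletCharacter ℂ N) (u : ℂ) (n : ℕ) :
    sigmaChar χ u n = (ζ * χ.mulCpow u) n := by
  rw [coe_zeta_mul_apply, sigmaChar, Int.natAbs_natCast]
  exact sum_congr rfl fun d hd => (χ.mulCpow_apply u (Nat.pos_of_mem_divisors hd).ne').symm

theorem DirichletCharacter.LSeriesHasSum_zeta_mul_mulCpow_pmul {N : ℕ} [NeZero N]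
    (χ ψ : DirichletCharacter ℂ N) {u v s : ℂ} (hs : 1 < s.re) (hsu : 1 < (s - u).re)
    (hsv : 1 < (s - v).re) (hsuv : 1 < (s - (u + v)).re) (hssuv : 1 < (2 * s - (u + v)).re) :
    LSeriesHasSum ((ζ * χ.mulCpow u).pmul (ζ * ψ.mulCpow v)) s
      (riemannZeta s * χ.LFunction (s - u) * ψ.LFunction (s - v)
        * (χ * ψ).LFunction (s - (u + v)) / (χ * ψ).LFunction (2 * s - (u + v))) := by
  obtain ⟨hζ, hζval⟩ := LSeriesHasSum_iff.1 <|
    (funext fun _ => natCoe_apply : ⇑(ζ : ArithmeticFunction ℂ) = ↗ζ) ▸ LSeriesHasSum_zeta hs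
  have hχ := χ.LSeriesSummable_mulCpow hsu
  have hψ := ψ.LSeriesSummable_mulCpow hsv
  have hW := (χ * ψ).LSeriesSummable_mulCpow hsuv
  have hζχ := ArithmeticFunction.LSeriesSummable_mul hζ hχ
  have hζχψ := ArithmeticFunction.LSeriesSummable_mul hζχ hψ
  have hG := ArithmeticFunction.LSeriesSummable_mul hζχψ hW
  have hW₂ := (χ * ψ).LSeriesSummable_mulCpow hssuv
  have hsq := LSeriesSummable_sqExtend_iff.2 hW₂.pmul_moebius
  have hinv :=
    ((χ * ψ).isCompletelyMultiplicative_mulCpow (u + v)).LSeries_mul_LSeries_pmul_moebius hW₂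
  rw [LSeries_mulCpow _ hssuv] at hinv
  rw [(χ.isCompletelyMultiplicative_mulCpow u).zeta_mul_pmul_zeta_mul
    (ψ.isCompletelyMultiplicative_mulCpow v), ← mulCpow_mul]
  refine LSeriesHasSum_iff.2 ⟨ArithmeticFunction.LSeriesSummable_mul hG hsq, ?_⟩
  rw [LSeries_mul' hG hsq, LSeries_mul' hζχψ hW, LSeries_mul' hζχ hψ, LSeries_mul' hζ hχ,
    LSeries_sqExtend, hζval,
    χ.LSeries_mulCpow hsu, ψ.LSeries_mulCpow hsv, (χ * ψ).LSeries_mulCpow hsuv,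
    eq_div_iff (left_ne_zero_of_mul_eq_one hinv)]
  linear_combination (riemannZeta s * χ.LFunction (s - u) * ψ.LFunction (s - v)
    * (χ * ψ).LFunction (s - (u + v))) * hinv

/-- Character-twisted Ramanujan identity. -/
theorem ramanujan_identity {N : ℕ} [NeZero N] (χ ψ : DirichletCharacter ℂ N) (u v s : ℂ)
    (hs : 1 + max u.re 0 + max v.re 0 + max (u + v).re 0 < s.re) :
    ∑' n : ℕ, sigmaChar χ u ((n : ℤ) + 1) * sigmaChar ψ v ((n : ℤ) + 1) / ((n : ℂ) + 1) ^ s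
      = riemannZeta s * DirichletCharacter.LFunction χ (s - u)
          * DirichletCharacter.LFunction ψ (s - v)
          * DirichletCharacter.LFunction (χ * ψ) (s - u - v)
          / DirichletCharacter.LFunction (χ * ψ) (2 * s - u - v) := by
  have hu := le_max_left u.re 0; have hu₀ := le_max_right u.re 0
  have hv := le_max_left v.re 0; have hv₀ := le_max_right v.re 0
  have huv := le_max_left (u + v).re 0; have huv₀ := le_max_right (u + v).re 0
  have huv_re := add_re u v
  obtain ⟨hsum, hval⟩ := LSeriesHasSum_iff.1 <| χ.LSeriesHasSum_zeta_mul_mulCpow_pmul ψ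
    (s := s) (u := u) (v := v) (by linarith) (by norm_num; linarith) (by norm_num; linarith)
    (by norm_num; linarith) (by norm_num; linarith)
  rw [sub_sub, sub_sub, ← hval, LSeries, hsum.tsum_eq_zero_add, term_zero, zero_add]
  refine tsum_congr fun n => ?_
  rw [term_of_ne_zero n.succ_ne_zero, pmul_apply, ← sigmaChar_natCast, ← sigmaChar_natCast]
  push_cast
  rfl
end

section
/- Let χ and ψ be Dirichlet characters and fix a prime p with x := χ(p)p^u, y := ψ(p)p^v, t := p^{−s}, where |x t| < 1, |y t| < 1, |t| < 1, |x y t| < 1. Then Σ_{m≥0} t^m · ((1 − x^{m+1})/(1 − x)) · ((1 − y^{m+1})/(1 − y)) = (1 − x y t²) / ((1 − t)(1 − x t)(1 − y t)(1 − x y t)), assuming x ≠ 1 and y ≠ 1. -/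
/-- Local Euler factor computation underlying the character-twisted Ramanujan identity. -/
theorem local_euler_factor {N : ℕ} (χ ψ : DirichletCharacter ℂ N) (p : ℕ) (hp : p.Prime)
    (u v s : ℂ) (x y t : ℂ)
    (hx : x = χ (p : ZMod N) * (p : ℂ) ^ u)
    (hy : y = ψ (p : ZMod N) * (p : ℂ) ^ v)
    (ht : t = (p : ℂ) ^ (-s))
    (hxt : ‖x * t‖ < 1) (hyt : ‖y * t‖ < 1) (htlt : ‖t‖ < 1) (hxyt : ‖x * y * t‖ < 1)
    (hx1 : x ≠ 1) (hy1 : y ≠ 1) :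
    ∑' m : ℕ, t ^ m * ((1 - x ^ (m + 1)) / (1 - x)) * ((1 - y ^ (m + 1)) / (1 - y))
      = (1 - x * y * t ^ 2) / ((1 - t) * (1 - x * t) * (1 - y * t) * (1 - x * y * t)) := by
  have hx' : (1 : ℂ) - x ≠ 0 := sub_ne_zero.mpr (Ne.symm hx1)
  have hy' : (1 : ℂ) - y ≠ 0 := sub_ne_zero.mpr (Ne.symm hy1)
  have ht0 : (1 : ℂ) - t ≠ 0 := by
    intro h; rw [sub_eq_zero] at h; rw [← h] at htlt; simp at htlt
  have hxt0 : (1 : ℂ) - x * t ≠ 0 := by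
    intro h; rw [sub_eq_zero] at h; rw [← h] at hxt; simp at hxt
  have hyt0 : (1 : ℂ) - y * t ≠ 0 := by
    intro h; rw [sub_eq_zero] at h; rw [← h] at hyt; simp at hyt
  have hxyt0 : (1 : ℂ) - x * y * t ≠ 0 := by
    intro h; rw [sub_eq_zero] at h; rw [← h] at hxyt; simp at hxyt
  have s1 : Summable fun m : ℕ => t ^ m := summable_geometric_of_norm_lt_one htlt
  have s2 : Summable fun m : ℕ => x * (x * t) ^ m :=
    (summable_geometric_of_norm_lt_one hxt).mul_left x
  have s3 : Summable fun m : ℕ => y * (y * t) ^ m :=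
    (summable_geometric_of_norm_lt_one hyt).mul_left y
  have s4 : Summable fun m : ℕ => x * y * (x * y * t) ^ m :=
    (summable_geometric_of_norm_lt_one hxyt).mul_left (x * y)
  have key : ∀ m : ℕ,
      t ^ m * ((1 - x ^ (m + 1)) / (1 - x)) * ((1 - y ^ (m + 1)) / (1 - y))
        = ((1 - x) * (1 - y))⁻¹ *
          ((t ^ m - x * (x * t) ^ m) - (y * (y * t) ^ m - x * y * (x * y * t) ^ m)) := by
    intro m
    field_simp [mul_pow]
    ring
  calc
    ∑' m : ℕ, t ^ m * ((1 - x ^ (m + 1)) / (1 - x)) * ((1 - y ^ (m + 1)) / (1 - y))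
        = ∑' m : ℕ, ((1 - x) * (1 - y))⁻¹ *
            ((t ^ m - x * (x * t) ^ m) - (y * (y * t) ^ m - x * y * (x * y * t) ^ m)) := by
          exact tsum_congr key
    _ = ((1 - x) * (1 - y))⁻¹ *
          ((∑' m : ℕ, t ^ m) - x * (∑' m : ℕ, (x * t) ^ m)
            - (y * (∑' m : ℕ, (y * t) ^ m) - x * y * (∑' m : ℕ, (x * y * t) ^ m))) := by
          rw [tsum_mul_left, Summable.tsum_sub (s1.sub s2) (s3.sub s4), Summable.tsum_sub s1 s2, Summable.tsum_sub s3 s4,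
            tsum_mul_left, tsum_mul_left, tsum_mul_left]
    _ = (1 - x * y * t ^ 2) / ((1 - t) * (1 - x * t) * (1 - y * t) * (1 - x * y * t)) := by
          rw [tsum_geometric_of_norm_lt_one htlt, tsum_geometric_of_norm_lt_one hxt,
            tsum_geometric_of_norm_lt_one hyt, tsum_geometric_of_norm_lt_one hxyt]
          field_simp
          ring
end

section
/- For real a > 0 and u, s ∈ ℂ with Re(s) > |Re(u)|, the Mellin transform of the K-Bessel function satisfies ∫_0^∞ K_u(a y) y^s dy/y = 2^{s−2} a^{−s} Γ((s+u)/2) Γ((s−u)/2). -/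
/-!
Substituting `t = x / y` in the integral defining `K_u(y)` gives
`y^(s-1) K_u(y) = (1/2) ∫₀^∞ x^(u-1) y^(s-u-1) exp(-(x + y²/x)/2) dx`.
Integrating in `y` first, the inner integral is the Mellin transform of a Gaussian,
`∫₀^∞ y^(s-u-1) exp(-y²/(2x)) dy = 2^((s-u)/2-1) Γ((s-u)/2) x^((s-u)/2)`, and what is left
is the Gamma integral `∫₀^∞ x^((s+u)/2-1) exp(-x/2) dx = 2^((s+u)/2) Γ((s+u)/2)`. The same
computation with `u, s` replaced by their real parts bounds the absolute value of the double
integral, which justifies Fubini. The scaling by `a` only contributes the factor `a^(-s)`.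
-/

open MeasureTheory

/-- The K-Bessel function `K_u(y) = (1/2) ∫_0^∞ exp(-y(t+t⁻¹)/2) t^u dt/t`. -/
noncomputable def KBessel (u : ℂ) (y : ℝ) : ℂ :=
  (1 / 2) * ∫ t in Set.Ioi (0 : ℝ), (Real.exp (-(y * (t + t⁻¹) / 2)) : ℂ) * (t : ℂ) ^ (u - 1)

open Set

lemma mellin_exp_neg_div {c : ℝ} (hc : 0 < c) {p : ℂ} (hp : 0 < p.re) :
    mellin (fun t : ℝ => (Real.exp (-(t / c)) : ℂ)) p = (c : ℂ) ^ p * Complex.Gamma p := by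
  have h := mellin_comp_mul_left (fun t : ℝ => (Real.exp (-t) : ℂ)) p (inv_pos.2 hc)
  rw [← Complex.GammaIntegral_eq_mellin, ← Complex.Gamma_eq_integral hp] at h
  have harg : (c : ℂ).arg ≠ Real.pi := by
    rw [Complex.arg_ofReal_of_nonneg hc.le]; exact Real.pi_pos.ne
  simp_rw [div_eq_inv_mul, h, smul_eq_mul, Complex.ofReal_inv, Complex.inv_cpow _ _ harg,
    Complex.cpow_neg, inv_inv]

lemma mellinConvergent_exp_neg_div {c : ℝ} (hc : 0 < c) {p : ℂ} (hp : 0 < p.re) :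
    MellinConvergent (fun t : ℝ => (Real.exp (-(t / c)) : ℂ)) p := by
  simp_rw [div_eq_inv_mul]
  refine (MellinConvergent.comp_mul_left (f := fun t : ℝ => (Real.exp (-t) : ℂ))
    (inv_pos.2 hc)).2 ?_
  simpa only [MellinConvergent, smul_eq_mul, mul_comm] using Complex.GammaIntegral_convergent hp

lemma mellin_exp_neg_sq_div {c : ℝ} (hc : 0 < c) {p : ℂ} (hp : 0 < p.re) :
    mellin (fun t : ℝ => (Real.exp (-(t ^ 2 / c)) : ℂ)) p
      = 2⁻¹ * (c : ℂ) ^ (p / 2) * Complex.Gamma (p / 2) := by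
  have h := mellin_comp_rpow (fun t : ℝ => (Real.exp (-(t / c)) : ℂ)) p 2
  simp_rw [Real.rpow_two] at h
  rw [h, Complex.ofReal_ofNat, mellin_exp_neg_div hc (by simpa using hp), abs_two,
    Complex.real_smul]
  push_cast
  ring

lemma mellinConvergent_exp_neg_sq_div {c : ℝ} (hc : 0 < c) {p : ℂ} (hp : 0 < p.re) :
    MellinConvergent (fun t : ℝ => (Real.exp (-(t ^ 2 / c)) : ℂ)) p := by
  have h := MellinConvergent.comp_rpow (f := fun t : ℝ => (Real.exp (-(t / c)) : ℂ)) (s := p)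
    two_ne_zero
  simp_rw [Real.rpow_two] at h
  exact h.2 (mellinConvergent_exp_neg_div hc (by simpa using hp))

noncomputable def besselKernel (α β : ℂ) (x y : ℝ) : ℂ :=
  (x : ℂ) ^ (α - 1) * (y : ℂ) ^ (β - 1) * (Real.exp (-((x + y ^ 2 / x) / 2)) : ℂ)

section besselKernel

variable {α β : ℂ} {x : ℝ}

lemma besselKernel_eq_mul (hx : x ≠ 0) (y : ℝ) :
    besselKernel α β x y = (x : ℂ) ^ (α - 1) * (Real.exp (-(x / 2)) : ℂ)
      * ((y : ℂ) ^ (β - 1) * (Real.exp (-(y ^ 2 / (2 * x))) : ℂ)) := by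
  have hexp : -((x + y ^ 2 / x) / 2) = -(x / 2) + -(y ^ 2 / (2 * x)) := by
    field_simp; ring
  rw [besselKernel, hexp, Real.exp_add, Complex.ofReal_mul]
  ring

lemma norm_besselKernel (hx : 0 < x) {y : ℝ} (hy : 0 < y) :
    (‖besselKernel α β x y‖ : ℂ) = besselKernel α.re β.re x y := by
  simp only [besselKernel, norm_mul, Complex.norm_cpow_eq_rpow_re_of_pos hx,
    Complex.norm_cpow_eq_rpow_re_of_pos hy, Complex.norm_real,
    Real.norm_of_nonneg (Real.exp_pos _).le, Complex.sub_re, Complex.one_re]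
  push_cast
  rw [Complex.ofReal_cpow hx.le, Complex.ofReal_cpow hy.le]
  push_cast
  ring

lemma integrableOn_besselKernel_right (hx : 0 < x) (hβ : 0 < β.re) :
    IntegrableOn (besselKernel α β x) (Ioi 0) := by
  rw [funext (besselKernel_eq_mul hx.ne')]
  exact (mellinConvergent_exp_neg_sq_div (by positivity) hβ).const_mul _

lemma integral_besselKernel_right (hx : 0 < x) (hβ : 0 < β.re) :
    ∫ y in Ioi 0, besselKernel α β x y
      = 2 ^ (β / 2 - 1) * Complex.Gamma (β / 2)
        * ((x : ℂ) ^ (α + β / 2 - 1) * (Real.exp (-(x / 2)) : ℂ)) := by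
  have hgauss := mellin_exp_neg_sq_div (by positivity : 0 < 2 * x) hβ
  simp only [mellin, smul_eq_mul] at hgauss
  have hx0 : (x : ℂ) ≠ 0 := by exact_mod_cast hx.ne'
  simp_rw [besselKernel_eq_mul hx.ne', integral_const_mul, hgauss, Complex.ofReal_mul,
    Complex.mul_cpow_ofReal_nonneg zero_le_two hx.le, Complex.cpow_sub _ _ two_ne_zero,
    Complex.cpow_sub _ _ hx0, Complex.cpow_add _ _ hx0, Complex.cpow_one, Complex.ofReal_ofNat]
  field_simp

lemma integrable_besselKernel (hβ : 0 < β.re) (hγ : 0 < (α + β / 2).re) :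
    Integrable (Function.uncurry (besselKernel α β))
      ((volume.restrict (Ioi 0)).prod (volume.restrict (Ioi 0))) := by
  have hmeas : Measurable (Function.uncurry (besselKernel α β)) := by
    unfold besselKernel Function.uncurry; fun_prop
  refine (integrable_prod_iff hmeas.aestronglyMeasurable).2 ⟨?_, ?_⟩
  · filter_upwards [ae_restrict_mem measurableSet_Ioi] with x hx
    exact integrableOn_besselKernel_right hx hβ
  · have hγ' : 0 < ((α.re : ℂ) + (β.re : ℂ) / 2).re := by simpa using hγ
    refine ((mellinConvergent_exp_neg_div two_pos hγ').const_mul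
      (2 ^ ((β.re : ℂ) / 2 - 1) * Complex.Gamma ((β.re : ℂ) / 2))).norm.congr ?_
    filter_upwards [ae_restrict_mem measurableSet_Ioi] with x (hx : 0 < x)
    simp only [smul_eq_mul, Function.uncurry_apply_pair]
    rw [← integral_besselKernel_right hx (by simpa using hβ),
      ← setIntegral_congr_fun measurableSet_Ioi (fun y hy => norm_besselKernel hx hy),
      integral_complex_ofReal, Complex.norm_real,
      Real.norm_of_nonneg (integral_nonneg fun _ => norm_nonneg _)]

lemma integral_integral_besselKernel (hβ : 0 < β.re) (hγ : 0 < (α + β / 2).re) :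
    ∫ x in Ioi 0, ∫ y in Ioi 0, besselKernel α β x y
      = 2 ^ (β / 2 - 1) * Complex.Gamma (β / 2)
        * (2 ^ (α + β / 2) * Complex.Gamma (α + β / 2)) := by
  have hgamma := mellin_exp_neg_div two_pos hγ
  simp only [mellin, smul_eq_mul] at hgamma
  rw [setIntegral_congr_fun measurableSet_Ioi (fun x hx => integral_besselKernel_right hx hβ),
    integral_const_mul, hgamma]
  push_cast
  rfl

end besselKernel

lemma KBessel_eq_cpow_mul_mellin (u : ℂ) {y : ℝ} (hy : 0 < y) :
    KBessel u y = 2⁻¹ * (y : ℂ) ^ (-u)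
      * mellin (fun x : ℝ => (Real.exp (-((x + y ^ 2 / x) / 2)) : ℂ)) u := by
  have hscale :=
    mellin_comp_mul_left (fun x : ℝ => (Real.exp (-((x + y ^ 2 / x) / 2)) : ℂ)) u hy
  have harg (t : ℝ) : (y * t + y ^ 2 / (y * t)) / 2 = y * (t + t⁻¹) / 2 := by
    rw [sq, mul_div_mul_left _ _ hy.ne']
    ring
  simp only [harg] at hscale
  rw [mul_assoc, ← smul_eq_mul ((y : ℂ) ^ (-u)), ← hscale, KBessel, mellin]
  simp only [one_div, smul_eq_mul, mul_comm]

theorem mellin_KBessel {u s : ℂ} (hs : |u.re| < s.re) :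
    mellin (KBessel u) s
      = 2 ^ (s - 2) * Complex.Gamma ((s + u) / 2) * Complex.Gamma ((s - u) / 2) := by
  obtain ⟨hsu, hus⟩ := abs_lt.mp hs
  have hβ : 0 < (s - u).re := by simp only [Complex.sub_re]; linarith
  have hγ : 0 < (u + (s - u) / 2).re := by
    simp only [Complex.add_re, Complex.sub_re, Complex.div_ofNat_re]; linarith
  have hslice : ∀ y ∈ Ioi (0 : ℝ), (y : ℂ) ^ (s - 1) • KBessel u y
      = 2⁻¹ * ∫ x in Ioi 0, besselKernel u (s - u) x y := by
    intro y (hy : 0 < y)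
    have hpow : (y : ℂ) ^ (s - 1) * (y : ℂ) ^ (-u) = (y : ℂ) ^ (s - u - 1) := by
      rw [← Complex.cpow_add _ _ (by exact_mod_cast hy.ne')]
      ring_nf
    calc (y : ℂ) ^ (s - 1) • KBessel u y
        = 2⁻¹ * ((y : ℂ) ^ (s - 1) * (y : ℂ) ^ (-u)
            * mellin (fun x : ℝ => (Real.exp (-((x + y ^ 2 / x) / 2)) : ℂ)) u) := by
          rw [KBessel_eq_cpow_mul_mellin u hy, smul_eq_mul]
          ring
      _ = _ := by
          rw [hpow, mellin, ← integral_const_mul]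
          congr 1
          refine setIntegral_congr_fun measurableSet_Ioi fun x _ => ?_
          simp only [besselKernel, smul_eq_mul]
          ring
  have h2 : (2 : ℂ) ^ (s - 2) = 2⁻¹ * (2 ^ ((s - u) / 2 - 1) * 2 ^ ((s + u) / 2)) := by
    rw [← Complex.cpow_add _ _ two_ne_zero,
      show (s - u) / 2 - 1 + (s + u) / 2 = s - 2 + 1 by ring, Complex.cpow_add _ _ two_ne_zero,
      Complex.cpow_one]
    field_simp
  calc mellin (KBessel u) s
      = 2⁻¹ * ∫ y in Ioi 0, ∫ x in Ioi 0, besselKernel u (s - u) x y := by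
        rw [mellin, setIntegral_congr_fun measurableSet_Ioi hslice, integral_const_mul]
    _ = 2⁻¹ * ∫ x in Ioi 0, ∫ y in Ioi 0, besselKernel u (s - u) x y := by
        rw [← integral_integral_swap (integrable_besselKernel hβ hγ)]
    _ = _ := by
        rw [integral_integral_besselKernel hβ hγ, show u + (s - u) / 2 = (s + u) / 2 by ring, h2]
        ring

theorem KBessel_mellin (a : ℝ) (ha : 0 < a) (u s : ℂ) (hs : |u.re| < s.re) :
    ∫ y in Set.Ioi (0 : ℝ), KBessel u (a * y) * (y : ℂ) ^ (s - 1)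
      = 2 ^ (s - 2) * (a : ℂ) ^ (-s) * Complex.Gamma ((s + u) / 2)
          * Complex.Gamma ((s - u) / 2) := by
  calc ∫ y in Set.Ioi (0 : ℝ), KBessel u (a * y) * (y : ℂ) ^ (s - 1)
      = mellin (fun y => KBessel u (a * y)) s := by simp only [mellin, smul_eq_mul, mul_comm]
    _ = _ := by
        rw [mellin_comp_mul_left _ _ ha, mellin_KBessel hs, smul_eq_mul]
        ring
end
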